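/- Fix integers n ≥ 2 and 1 ≤ d < n. Let 1 ≤ i ≤ d and V = Λ^i ℝ^{d+1}. For every 0 < θ < i there exists C_θ > 0 such that for every t > 0 and every v ∈ V \ {0}: ∫_{I^d} ‖c_t u(s) v‖^{−θ} ds ≤ C_θ · e^{−((d+1−i)/(d+1))·θ·t} · ‖v‖^{−θ}. -/

import Mathlib

open Matrix MeasureTheory Filter
open scoped ENNReal NNReal

noncomputable section

/-! ## Exterior powers in coordinates -/

/-- Index set for the standard wedge basis of Λ^k ℝ^m : k-element subsets of {0,…,m−1}. -/
abbrev Idx (m k : ℕ) := {J : Finset (Fin m) // J.card = k}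

/-- Model for the k-th exterior power of ℝ^m, with its sup norm w.r.t. the wedge basis. -/
abbrev Lam (m k : ℕ) := Idx m k → ℝ

/-- Increasing enumeration of a k-element subset of Fin m. -/
def finsetEmb {m k : ℕ} (J : Idx m k) : Fin k → Fin m := fun a => (J.1.orderIsoOfFin J.2 a : Fin m)

/-- Action of an m×m matrix on the k-th exterior power, in the standard wedge basis
(given by the k×k minors). -/
def extPow {m k : ℕ} (g : Matrix (Fin m) (Fin m) ℝ) (v : Lam m k) : Lam m k :=
  fun J => ∑ K : Idx m k, (g.submatrix (finsetEmb J) (finsetEmb K)).det * v K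

/-- The wedge product v₁ ∧ ⋯ ∧ v_k of k vectors in ℝ^m, in coordinates. -/
def wedge {m k : ℕ} (vs : Fin k → (Fin m → ℝ)) : Lam m k :=
  fun J => (Matrix.of fun a b : Fin k => vs b (finsetEmb J a)).det

/-- The wedge product of k integer vectors. -/
def wedgeInt {m k : ℕ} (vs : Fin k → (Fin m → ℤ)) : Lam m k :=
  wedge (fun j i => (vs j i : ℝ))

/-- The projection π_i of Λ^k ℝ^m onto the span of the wedges e_J having exactly i factors
among e_0,…,e_d (zero if i is out of range). -/
def proj (d : ℕ) {m k : ℕ} (i : ℕ) (v : Lam m k) : Lam m k :=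
  fun J => if (J.1.filter (fun x : Fin m => (x : ℕ) ≤ d)).card = i then v J else 0

/-- The projection π₊ of Λ^k ℝ^{d+1} onto the span of the wedges e_J with 0 ∈ J. -/
def projPlus {d k : ℕ} (v : Lam (d+1) k) : Lam (d+1) k :=
  fun J => if (0 : Fin (d+1)) ∈ J.1 then v J else 0

/-- The projection π₋ of Λ^k ℝ^{d+1} onto the span of the wedges e_J with 0 ∉ J. -/
def projMinus {d k : ℕ} (v : Lam (d+1) k) : Lam (d+1) k :=
  fun J => if (0 : Fin (d+1)) ∉ J.1 then v J else 0

/-! ## The homogeneous space X = SL_{n+1}(ℝ)/SL_{n+1}(ℤ) -/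

noncomputable instance SLtop (m : ℕ) : TopologicalSpace (Matrix.SpecialLinearGroup (Fin m) ℝ) :=
  TopologicalSpace.induced (fun g => (g : Matrix (Fin m) (Fin m) ℝ)) inferInstance

abbrev SLn (m : ℕ) := Matrix.SpecialLinearGroup (Fin m) ℝ

/-- Γ = SL_m(ℤ) viewed as a subgroup of SL_m(ℝ). -/
def Gamma (m : ℕ) : Subgroup (SLn m) :=
  (Matrix.SpecialLinearGroup.map (n := Fin m) (Int.castRingHom ℝ)).range

/-- The space X = SL_m(ℝ)/SL_m(ℤ). -/
abbrev Xsp (m : ℕ) := SLn m ⧸ Gamma m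

/-! ## Matrices and one-parameter subgroups -/

lemma det_upperTri {m : ℕ} (M : Matrix (Fin m) (Fin m) ℝ)
    (hoff : ∀ i j : Fin m, (j : ℕ) < (i : ℕ) → M i j = 0)
    (hdiag : ∀ i, M i i = 1) : M.det = 1 := by
  have hbt : M.BlockTriangular id := fun i j hij => hoff i j hij
  rw [Matrix.det_of_upperTriangular hbt]
  simp [hdiag]

/-- u(s): the identity matrix with s₁,…,s_d placed in the first row (columns 1,…,d). -/
def uMat (n d : ℕ) (s : Fin d → ℝ) : Matrix (Fin (n+1)) (Fin (n+1)) ℝ :=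
  Matrix.of fun i j =>
    if i = j then 1
    else if h : i = 0 ∧ 1 ≤ (j : ℕ) ∧ (j : ℕ) ≤ d then s ⟨(j : ℕ) - 1, by omega⟩ else 0

/-- u(s) as an element of SL_{n+1}(ℝ). -/
def uSL (n d : ℕ) (s : Fin d → ℝ) : SLn (n+1) :=
  ⟨uMat n d s, det_upperTri _ (fun i j hij => by
      simp only [uMat, Matrix.of_apply]
      rw [if_neg (by rintro rfl; omega), dif_neg (by rintro ⟨rfl, h1, h2⟩; simp at hij)])
    (fun i => by simp [uMat])⟩

/-- u(x): the identity matrix with x ∈ ℝ^n placed in the first row. -/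
def uxMat (n : ℕ) (x : Fin n → ℝ) : Matrix (Fin (n+1)) (Fin (n+1)) ℝ :=
  Matrix.of fun i j =>
    if i = j then 1
    else if h : i = 0 ∧ 1 ≤ (j : ℕ) then x ⟨(j : ℕ) - 1, by have := j.isLt; omega⟩ else 0

/-- u(x) as an element of SL_{n+1}(ℝ). -/
def uxSL (n : ℕ) (x : Fin n → ℝ) : SLn (n+1) :=
  ⟨uxMat n x, det_upperTri _ (fun i j hij => by
      simp only [uxMat, Matrix.of_apply]
      rw [if_neg (by rintro rfl; omega), dif_neg (by rintro ⟨rfl, h1⟩; simp at hij)])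
    (fun i => by simp [uxMat])⟩

/-- u_A: the block unipotent matrix with I_{d+1}, I_{n−d} on the diagonal and A in the
upper-right block. -/
def uAMat (n d : ℕ) (A : Matrix (Fin (d+1)) (Fin (n-d)) ℝ) : Matrix (Fin (n+1)) (Fin (n+1)) ℝ :=
  Matrix.of fun i j =>
    if i = j then 1
    else if h : (i : ℕ) ≤ d ∧ d + 1 ≤ (j : ℕ) then
      A ⟨(i : ℕ), by omega⟩ ⟨(j : ℕ) - (d+1), by have := j.isLt; omega⟩ else 0

/-- u_A as an element of SL_{n+1}(ℝ). -/
def uASL (n d : ℕ) (A : Matrix (Fin (d+1)) (Fin (n-d)) ℝ) : SLn (n+1) :=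
  ⟨uAMat n d A, det_upperTri _ (fun i j hij => by
      simp only [uAMat, Matrix.of_apply]
      rw [if_neg (by rintro rfl; omega), dif_neg (by rintro ⟨h1, h2⟩; omega)])
    (fun i => by simp [uAMat])⟩

lemma sum_ite_fin (m k : ℕ) (hk : k ≤ m) (a b : ℝ) :
    (∑ i : Fin m, if (i : ℕ) < k then a else b) = k * a + ((m - k : ℕ) : ℝ) * b := by
  rw [Fin.sum_univ_eq_sum_range (fun i => if i < k then a else b) m]
  rw [Finset.range_eq_Ico, ← Finset.sum_Ico_consecutive _ (Nat.zero_le k) hk]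
  rw [Finset.sum_congr rfl (fun i hi => if_pos (Finset.mem_Ico.mp hi).2),
    Finset.sum_congr rfl (g := fun _ => b)
      (fun i hi => if_neg (Nat.not_lt.mpr (Finset.mem_Ico.mp hi).1))]
  simp [Nat.card_Ico, mul_comm]

/-- A diagonal matrix with entries exp (f i), as an element of SL_m(ℝ). -/
def diagSL (m : ℕ) (f : Fin m → ℝ) (h : ∑ i, f i = 0) : SLn m :=
  ⟨Matrix.diagonal fun i => Real.exp (f i), by
    rw [Matrix.det_diagonal, ← Real.exp_sum, h, Real.exp_zero]⟩

/-- b_t = diag(e^{(n−d)t/((d+1)(n+1))}·I_{d+1}, e^{−t/(n+1)}·I_{n−d}) ∈ SL_{n+1}(ℝ). -/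
def btSL (n d : ℕ) (h : d ≤ n) (t : ℝ) : SLn (n+1) :=
  diagSL (n+1)
    (fun i => if (i : ℕ) < d + 1 then ((n : ℝ) - (d : ℝ)) * t / (((d : ℝ) + 1) * ((n : ℝ) + 1))
      else -t / ((n : ℝ) + 1))
    (by
      rw [sum_ite_fin (n+1) (d+1) (by omega)]
      have h1 : ((n + 1 - (d + 1) : ℕ) : ℝ) = (n : ℝ) - (d : ℝ) := by
        have h2 : (n + 1 - (d + 1) : ℕ) = n - d := by omega
        rw [h2, Nat.cast_sub h]
      rw [h1]
      have hd1 : ((d : ℝ) + 1) ≠ 0 := by positivity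
      have hn1 : ((n : ℝ) + 1) ≠ 0 := by positivity
      field_simp
      push_cast
      ring)

/-- c_t = diag(e^{dt/(d+1)}, e^{−t/(d+1)}·I_d, I_{n−d}) ∈ SL_{n+1}(ℝ). -/
def ctSL (n d : ℕ) (h : d ≤ n) (t : ℝ) : SLn (n+1) :=
  diagSL (n+1)
    (fun i => if (i : ℕ) = 0 then (d : ℝ) * t / ((d : ℝ) + 1)
      else if (i : ℕ) < d + 1 then -t / ((d : ℝ) + 1) else 0)
    (by
      rw [Fin.sum_univ_succ]
      simp only [Fin.val_zero, if_pos rfl, Fin.val_succ]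
      have key : ∀ i : Fin n,
          (if (i : ℕ) + 1 = 0 then (d : ℝ) * t / ((d : ℝ) + 1)
            else if (i : ℕ) + 1 < d + 1 then -t / ((d : ℝ) + 1) else 0)
          = (if (i : ℕ) < d then -t / ((d : ℝ) + 1) else 0) := by
        intro i
        rw [if_neg (by omega)]
        by_cases hc : (i : ℕ) < d
        · rw [if_pos (by omega), if_pos hc]
        · rw [if_neg (by omega), if_neg hc]
      rw [Finset.sum_congr rfl fun i _ => key i, sum_ite_fin n d h]
      have hd1 : ((d : ℝ) + 1) ≠ 0 := by positivity
      simp only [if_true]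
      field_simp
      try (push_cast; ring))

/-- g_t = diag(e^{nt/(n+1)}, e^{−t/(n+1)}·I_n) ∈ SL_{n+1}(ℝ). -/
def gtSL (n : ℕ) (t : ℝ) : SLn (n+1) :=
  diagSL (n+1)
    (fun i => if (i : ℕ) = 0 then (n : ℝ) * t / ((n : ℝ) + 1) else -t / ((n : ℝ) + 1))
    (by
      rw [Fin.sum_univ_succ]
      simp only [Fin.val_zero, if_pos rfl, Fin.val_succ]
      have key : ∀ i : Fin n,
          (if (i : ℕ) + 1 = 0 then (n : ℝ) * t / ((n : ℝ) + 1) else -t / ((n : ℝ) + 1))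
          = -t / ((n : ℝ) + 1) := fun i => if_neg (by omega)
      rw [Finset.sum_congr rfl fun i _ => key i, Finset.sum_const, Finset.card_univ,
        Fintype.card_fin, nsmul_eq_mul]
      have hn1 : ((n : ℝ) + 1) ≠ 0 := by positivity
      simp only [if_true]
      field_simp
      try (push_cast; ring))

/-- c_t = diag(e^{dt/(d+1)}, e^{−t/(d+1)}·I_d) as a (d+1)×(d+1) matrix. -/
def ctMat1 (d : ℕ) (t : ℝ) : Matrix (Fin (d+1)) (Fin (d+1)) ℝ :=
  Matrix.diagonal fun i =>
    if (i : ℕ) = 0 then Real.exp ((d : ℝ) * t / ((d : ℝ) + 1))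
    else Real.exp (-t / ((d : ℝ) + 1))

/-- c_t = diag(e^{dt/(d+1)}, e^{−t/(d+1)}·I_d, I_{n−d}) as an (n+1)×(n+1) matrix. -/
def ctMatN (n d : ℕ) (t : ℝ) : Matrix (Fin (n+1)) (Fin (n+1)) ℝ :=
  Matrix.diagonal fun i =>
    if (i : ℕ) = 0 then Real.exp ((d : ℝ) * t / ((d : ℝ) + 1))
    else if (i : ℕ) < d + 1 then Real.exp (-t / ((d : ℝ) + 1)) else 1

/-- The identification Fin (n+1) ≃ Fin (d+1) ⊕ Fin (n−d). -/
def finSplit (n d : ℕ) (h : d ≤ n) : Fin (n+1) ≃ Fin (d+1) ⊕ Fin (n-d) :=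
  (finCongr (by omega)).trans finSumFinEquiv.symm

/-- The embedding SL_{d+1}(ℝ) → SL_{n+1}(ℝ), h ↦ diag(h, I_{n−d}); its image is the
subgroup H of the paper. -/
def embedSL (n d : ℕ) (h : d ≤ n) (g : Matrix.SpecialLinearGroup (Fin (d+1)) ℝ) : SLn (n+1) :=
  ⟨Matrix.reindex (finSplit n d h).symm (finSplit n d h).symm
      (Matrix.fromBlocks (g : Matrix (Fin (d+1)) (Fin (d+1)) ℝ) 0 0
        (1 : Matrix (Fin (n-d)) (Fin (n-d)) ℝ)), by
    rw [Matrix.det_reindex_self, Matrix.det_fromBlocks_zero₂₁, Matrix.det_one, mul_one]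
    exact g.2⟩

/-! ## Height functions and exponents -/

/-- The cube I^d = [−1/2, 1/2]^d. -/
def Icube (d : ℕ) : Set (Fin d → ℝ) := Set.univ.pi fun _ => Set.Icc (-(1/2) : ℝ) (1/2)

/-- The function φ_ε on Λ^k ℝ^{n+1}, with values in [0,∞] (here δ_k = (n+1−k)k). -/
def phiFn (n d k : ℕ) (ε : ℝ) (v : Lam (n+1) k) : ℝ≥0∞ :=
  if ‖proj d 0 v + proj d (d+1) v‖ < ε ^ ((n + 1 - k) * k) then
    ⨅ i ∈ Finset.Icc 1 d,
      ENNReal.ofReal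
          (ε ^ ((((d : ℝ) + 1) / (((d : ℝ) + 1) - (i : ℝ))) * (((n + 1 - k) * k : ℕ) : ℝ)))
        * ENNReal.ofReal ‖proj d i v‖ ^ (-(((d : ℝ) + 1) / (((d : ℝ) + 1) - (i : ℝ))))
  else 0

/-- v ∈ Λ^k ℝ^{n+1} is a y-integral vector: v = g(v₁ ∧ ⋯ ∧ v_k) for a representative g
of y and linearly independent integer vectors v₁,…,v_k. -/
def IsIntegralVec (n : ℕ) {k : ℕ} (y : Xsp (n+1)) (v : Lam (n+1) k) : Prop :=
  ∃ g : SLn (n+1), (QuotientGroup.mk g : Xsp (n+1)) = y ∧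
    ∃ w : Fin k → (Fin (n+1) → ℤ), LinearIndependent ℤ w ∧
      v = extPow (g : Matrix (Fin (n+1)) (Fin (n+1)) ℝ) (wedgeInt w)

/-- The Margulis height function α_ε^θ on X. -/
def alphaF (n d : ℕ) (ε θ : ℝ) (y : Xsp (n+1)) : ℝ≥0∞ :=
  ⨆ k ∈ Finset.Icc 1 n, ⨆ v : Lam (n+1) k, ⨆ _ : v ≠ 0 ∧ IsIntegralVec n y v, phiFn n d k ε v ^ θ

/-- The dynamical exponent ρ(y; b_t, α) = limsup_{t→∞} log α(b_t y) / t ∈ [−∞,∞]. -/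
def rhoExp (n d : ℕ) (h : d ≤ n) (α : Xsp (n+1) → ℝ≥0∞) (y : Xsp (n+1)) : EReal :=
  Filter.limsup (fun t : ℝ => ENNReal.log (α (btSL n d h t • y)) / (t : EReal)) Filter.atTop

/-- α̃_δ(y) = ∫₀^∞ e^{−δt} α(b_t y) dt. -/
def atilde (n d : ℕ) (h : d ≤ n) (δ : ℝ) (α : Xsp (n+1) → ℝ≥0∞) (y : Xsp (n+1)) : ℝ≥0∞ :=
  ∫⁻ t in Set.Ioi (0 : ℝ), ENNReal.ofReal (Real.exp (-δ * t)) * α (btSL n d h t • y)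

/-- α is Lipschitz with respect to the action of H = diag(SL_{d+1}(ℝ), I_{n−d}). -/
def LipschitzWrtH (n d : ℕ) (h : d ≤ n) (α : Xsp (n+1) → ℝ≥0∞) : Prop :=
  ∀ F : Set (SLn (n+1)), F ⊆ Set.range (embedSL n d h) → IsCompact F →
    ∃ C : ℝ, 1 ≤ C ∧ ∀ g ∈ F, ∀ y : Xsp (n+1), α (g • y) ≤ ENNReal.ofReal C * α y

/-- y ∈ X is g_t-divergent on average. -/
def gDivergentOnAvg (n : ℕ) (y : Xsp (n+1)) : Prop :=
  ∀ K : Set (Xsp (n+1)), IsCompact K →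
    Tendsto (fun N : ℕ => ((Set.ncard {l : ℕ | 1 ≤ l ∧ l ≤ N ∧ gtSL n l • y ∈ K} : ℝ) / N))
      atTop (nhds 0)

/-- The set B_x(M,t,m;N) of the paper (for x = y_A and the height function α̃ = α̃_δ). -/
def Bset (n d : ℕ) (h : d ≤ n) (δ : ℝ) (α : Xsp (n+1) → ℝ≥0∞) (yA : Xsp (n+1))
    (M t : ℝ) (m N : ℕ) : Set (Fin d → ℝ) :=
  {s : Fin d → ℝ | s ∈ Icube d ∧
    atilde n d h δ α ((gtSL n ((m : ℝ) * t) * uSL n d s) • yA) < ENNReal.ofReal M ∧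
    ∀ l : ℕ, 1 ≤ l → l ≤ N →
      ENNReal.ofReal M ≤ atilde n d h δ α ((gtSL n (((m : ℝ) + (l : ℝ)) * t) * uSL n d s) • yA)}

/-! ## Diophantine approximation -/

/-- x ∈ ℝ^n is a singular vector. -/
def IsSingular (n : ℕ) (x : Fin n → ℝ) : Prop :=
  ∀ ε : ℝ, 0 < ε → ∃ N₀ : ℝ, ∀ N : ℝ, N₀ ≤ N → ∃ q : Fin n → ℤ, q ≠ 0 ∧ ∃ p : ℤ,
    |(∑ i, (q i : ℝ) * x i) - (p : ℝ)| ≤ ε * N ^ (-(n : ℝ)) ∧ ‖q‖ ≤ N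

/-- The vector (s, s̃A) ∈ ℝ^n, where s̃ = (1, s₁, …, s_d). -/
def xvec (n d : ℕ) (h : d ≤ n) (A : Matrix (Fin (d+1)) (Fin (n-d)) ℝ) (s : Fin d → ℝ) :
    Fin n → ℝ :=
  fun i => Fin.append s (Matrix.vecMul (Fin.cons 1 s) A) (Fin.cast (Nat.add_sub_cancel' h).symm i)

/-- The set of exponents ω for which ‖Aq − p‖ ≤ ‖q‖^{−ω} has infinitely many solutions
q ∈ ℤ^{n−d} \ {0}, p ∈ ℤ^{d+1}. -/
def diophSet (n d : ℕ) (A : Matrix (Fin (d+1)) (Fin (n-d)) ℝ) : Set ℝ :=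
  {ω : ℝ | {qp : (Fin (n-d) → ℤ) × (Fin (d+1) → ℤ) | qp.1 ≠ 0 ∧
    ‖A.mulVec (fun i => (qp.1 i : ℝ)) - (fun i => (qp.2 i : ℝ))‖ ≤ ‖qp.1‖ ^ (-ω)}.Infinite}

/-- The Diophantine exponent ω(A) ∈ [−∞, +∞]. -/
def omegaExp (n d : ℕ) (A : Matrix (Fin (d+1)) (Fin (n-d)) ℝ) : EReal :=
  sSup (Real.toEReal '' diophSet n d A)

end

/-!
On a wedge `e_J` with `0 ∈ J`, `c_t` acts by the scalar `e^{(d+1-i)t/(d+1)}`, so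
`‖c_t u(s) v‖ ≥ e^{(d+1-i)t/(d+1)} ‖π₊ u(s) v‖` and it suffices to bound
`∫_{I^d} ‖π₊ u(s) v‖^{-θ} ds` by `C ‖v‖^{-θ}`, uniformly in `v`.

If `π₋ v` is small compared with `v`, the largest coordinate of `v` sits on some `J ∋ 0`, and
`u(s)` perturbs it only through `π₋ v`, so `‖π₊ u(s) v‖ ≥ ‖v‖ / 2` on the whole cube.
Otherwise some `v_J` with `0 ∉ J` is comparable to `‖v‖`. For each of the `i` indices `j ∈ J`,
the coordinate of `u(s) v` on `(J \ {j}) ∪ {0}` is affine in `s_j` with slope `± v_J`, and does not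
depend on the other `s_m`, `m ∈ J`. Bounding `‖π₊ u(s) v‖^{-θ}` by the product of these `i`
coordinates to the power `-θ/i` and integrating one variable at a time reduces everything to
`∫_{-1/2}^{1/2} |c x + r|^{-θ/i} dx ≤ A |c|^{-θ/i}`, which holds because `θ / i < 1`.
-/

open Finset

section Wedge

variable {m k : ℕ}

lemma finsetEmb_eq_orderEmbOfFin (J : Idx m k) : finsetEmb J = J.1.orderEmbOfFin J.2 :=
  funext fun a => J.1.coe_orderIsoOfFin_apply J.2 a

lemma finsetEmb_mem (J : Idx m k) (a : Fin k) : finsetEmb J a ∈ J.1 := by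
  rw [finsetEmb_eq_orderEmbOfFin]; exact J.1.orderEmbOfFin_mem J.2 a

lemma finsetEmb_injective (J : Idx m k) : Function.Injective (finsetEmb J) := by
  rw [finsetEmb_eq_orderEmbOfFin]; exact (J.1.orderEmbOfFin J.2).injective

lemma image_finsetEmb (J : Idx m k) : univ.image (finsetEmb J) = J.1 := by
  rw [finsetEmb_eq_orderEmbOfFin]; exact J.1.image_orderEmbOfFin_univ J.2

lemma exists_finsetEmb_eq (J : Idx m k) {x : Fin m} (hx : x ∈ J.1) : ∃ a, finsetEmb J a = x := by
  rw [← image_finsetEmb J] at hx; simpa using hx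

lemma prod_finsetEmb {M : Type*} [CommMonoid M] (J : Idx m k) (f : Fin m → M) :
    ∏ a, f (finsetEmb J a) = ∏ x ∈ J.1, f x := by
  rw [← image_finsetEmb J, prod_image fun a _ b _ h => finsetEmb_injective J h]

lemma finsetEmb_zero {d : ℕ} [NeZero k] (J : Idx (d+1) k) (h0 : (0 : Fin (d+1)) ∈ J.1) :
    finsetEmb J 0 = 0 := by
  have hk : 0 < k := Nat.pos_of_ne_zero (NeZero.ne k)
  rw [finsetEmb_eq_orderEmbOfFin, show (0 : Fin k) = ⟨0, hk⟩ from rfl, orderEmbOfFin_zero J.2 hk]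
  exact le_antisymm (min'_le _ _ h0) (Fin.zero_le _)

lemma finsetEmb_ne_zero {d : ℕ} [NeZero k] (J : Idx (d+1) k) (h0 : (0 : Fin (d+1)) ∈ J.1)
    {a : Fin k} (ha : a ≠ 0) : finsetEmb J a ≠ 0 := fun h =>
  ha (finsetEmb_injective J (h.trans (finsetEmb_zero J h0).symm))

lemma Idx.exists_mem_notMem_of_ne {J K : Idx m k} (h : J ≠ K) : ∃ x ∈ J.1, x ∉ K.1 :=
  not_subset.1 fun hJK => h (Subtype.ext (eq_of_subset_of_card_le hJK (by rw [J.2, K.2])))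

end Wedge

section ExtPow

open Matrix

variable {m k : ℕ}

lemma extPow_diagonal_mul (D : Fin m → ℝ) (U : Matrix (Fin m) (Fin m) ℝ) (v : Lam m k)
    (K : Idx m k) : extPow (diagonal D * U) v K = (∏ x ∈ K.1, D x) * extPow U v K := by
  rw [extPow, extPow, mul_sum, ← prod_finsetEmb K D]
  refine sum_congr rfl fun K' _ => ?_
  have : (diagonal D * U).submatrix (finsetEmb K) (finsetEmb K') =
      diagonal (D ∘ finsetEmb K) * U.submatrix (finsetEmb K) (finsetEmb K') := by
    ext; simp [diagonal_mul]
  rw [this, det_mul, det_diagonal, mul_assoc]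
  rfl

lemma abs_extPow_apply_le {A : Matrix (Fin m) (Fin m) ℝ} (hA : ∀ p q, |A p q| ≤ 1)
    (w : Lam m k) (K : Idx m k) :
    |extPow A w K| ≤ Fintype.card (Idx m k) * k.factorial * ‖w‖ := by
  have hdet : ∀ K' : Idx m k, |(A.submatrix (finsetEmb K) (finsetEmb K')).det| ≤ k.factorial := by
    intro K'
    simpa using det_le (A := A.submatrix (finsetEmb K) (finsetEmb K')) (abv := AbsoluteValue.abs)
      fun p q => hA (finsetEmb K p) (finsetEmb K' q)
  calc |extPow A w K|
      ≤ ∑ K' : Idx m k, |(A.submatrix (finsetEmb K) (finsetEmb K')).det| * |w K'| := by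
        unfold extPow
        exact (abs_sum_le_sum_abs _ _).trans_eq (by simp only [abs_mul])
    _ ≤ ∑ _K' : Idx m k, (k.factorial : ℝ) * ‖w‖ :=
        sum_le_sum fun K' _ => mul_le_mul (hdet K') (norm_le_pi_norm w K') (abs_nonneg _)
          (Nat.cast_nonneg _)
    _ = _ := by simp [mul_assoc]

end ExtPow

section Projections

variable {d k : ℕ}

lemma exists_abs_apply_eq_norm {ι : Type*} [Fintype ι] [Nonempty ι] (w : ι → ℝ) :
    ∃ K, |w K| = ‖w‖ := by
  obtain ⟨K, -, hK⟩ := exists_max_image univ (fun K => |w K|) univ_nonempty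
  exact ⟨K, le_antisymm (norm_le_pi_norm w K)
    ((pi_norm_le_iff_of_nonneg (abs_nonneg _)).2 fun K' => hK K' (mem_univ K'))⟩

lemma abs_apply_le_norm_projPlus (w : Lam (d+1) k) {K : Idx (d+1) k}
    (h0 : (0 : Fin (d+1)) ∈ K.1) : |w K| ≤ ‖projPlus w‖ := by
  simpa [projPlus, h0] using norm_le_pi_norm (projPlus w) K

lemma norm_projPlus_le (w : Lam (d+1) k) : ‖projPlus w‖ ≤ ‖w‖ :=
  (pi_norm_le_iff_of_nonneg (norm_nonneg w)).2 fun K => by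
    unfold projPlus
    split_ifs
    · exact norm_le_pi_norm w K
    · simp

lemma prod_ctMat1_diag_of_zero_mem (t : ℝ) {K : Idx (d+1) k} (h0 : (0 : Fin (d+1)) ∈ K.1) :
    ∏ x ∈ K.1, (if (x : ℕ) = 0 then Real.exp ((d : ℝ) * t / ((d : ℝ) + 1))
      else Real.exp (-t / ((d : ℝ) + 1)))
      = Real.exp (((d : ℝ) + 1 - k) / ((d : ℝ) + 1) * t) := by
  have hk : 1 ≤ k := K.2 ▸ card_pos.2 ⟨0, h0⟩
  rw [← mul_prod_erase _ _ h0, Fin.val_zero, if_pos rfl,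
    prod_congr rfl (g := fun _ => Real.exp (-t / ((d : ℝ) + 1)))
      fun x hx => if_neg fun h => ne_of_mem_erase hx (Fin.val_eq_zero_iff.1 h),
    prod_const, card_erase_of_mem h0, K.2, ← Real.exp_nat_mul, ← Real.exp_add]
  congr 1
  push_cast [Nat.cast_sub hk]
  field_simp
  ring

lemma projPlus_extPow_ctMat1_mul (t : ℝ) (U : Matrix (Fin (d+1)) (Fin (d+1)) ℝ)
    (v : Lam (d+1) k) :
    projPlus (extPow (ctMat1 d t * U) v)
      = Real.exp (((d : ℝ) + 1 - k) / ((d : ℝ) + 1) * t) • projPlus (extPow U v) := by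
  ext K
  simp only [projPlus, Pi.smul_apply, smul_eq_mul]
  split_ifs with h0
  · rw [ctMat1, extPow_diagonal_mul, prod_ctMat1_diag_of_zero_mem t h0]
  · simp

end Projections

section Unipotent

open Matrix Function

variable {n k : ℕ}

@[simp] lemma uxMat_zero_zero (x : Fin n → ℝ) : uxMat n x 0 0 = 1 := by
  simp [uxMat]

@[simp] lemma uxMat_zero_succ (x : Fin n → ℝ) (j : Fin n) : uxMat n x 0 j.succ = x j := by
  simp [uxMat, (Fin.succ_ne_zero j).symm]

lemma uxMat_of_ne_zero (x : Fin n → ℝ) {p : Fin (n+1)} (hp : p ≠ 0) (q : Fin (n+1)) :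
    uxMat n x p q = (1 : Matrix (Fin (n+1)) (Fin (n+1)) ℝ) p q := by
  simp [uxMat, one_apply, hp]

lemma abs_uxMat_le_one {x : Fin n → ℝ} (hx : ∀ j, |x j| ≤ 1) (p q : Fin (n+1)) :
    |uxMat n x p q| ≤ 1 := by
  by_cases hp : p = 0
  · subst hp
    cases q using Fin.cases <;> simp [hx]
  · rw [uxMat_of_ne_zero x hp, one_apply]
    split_ifs <;> simp

lemma continuous_uxMat : Continuous (uxMat n) :=
  continuous_pi fun p => continuous_pi fun q => by
    simp only [uxMat, of_apply]
    split_ifs <;> fun_prop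

lemma uxMat_update (x : Fin n → ℝ) (j : Fin n) (y : ℝ) :
    uxMat n (update x j y)
      = (uxMat n x).updateRow 0 (uxMat n x 0 + (y - x j) • uxMat n x j.succ) := by
  ext p q
  cases p using Fin.cases with
  | zero =>
    cases q using Fin.cases with
    | zero => simp [uxMat_of_ne_zero x (Fin.succ_ne_zero j)]
    | succ q =>
      rw [updateRow_self, uxMat_zero_succ, Pi.add_apply, Pi.smul_apply, uxMat_zero_succ,
        uxMat_of_ne_zero x (Fin.succ_ne_zero j), one_apply, smul_eq_mul]
      by_cases hq : q = j
      · subst hq; simp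
      · simp [update_of_ne hq, Ne.symm hq]
  | succ p =>
    rw [updateRow_ne (Fin.succ_ne_zero p), uxMat_of_ne_zero _ (Fin.succ_ne_zero p),
      uxMat_of_ne_zero _ (Fin.succ_ne_zero p)]

lemma continuous_extPow_uxMat_apply (v : Lam (n+1) k) (K : Idx (n+1) k) :
    Continuous fun x : Fin n → ℝ => extPow (uxMat n x) v K :=
  continuous_finsetSum _ fun _ _ =>
    ((continuous_uxMat.matrix_submatrix _ _).matrix_det).mul continuous_const

end Unipotent

section Minors

open Matrix Function

variable {n k : ℕ}

/-- The pairing of `v` with `e_{φ 0} ∧ ⋯ ∧ e_{φ (k-1)}`. -/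
def wedgePairing {m : ℕ} (φ : Fin k → Fin m) (v : Lam m k) : ℝ :=
  ∑ K, ((1 : Matrix (Fin m) (Fin m) ℝ).submatrix φ (finsetEmb K)).det * v K

lemma wedgePairing_of_not_injective {m : ℕ} {φ : Fin k → Fin m} (hφ : ¬ Injective φ)
    (v : Lam m k) : wedgePairing φ v = 0 := by
  obtain ⟨a, b, hab, hne⟩ : ∃ a b, φ a = φ b ∧ a ≠ b := by
    simpa [Injective, and_comm] using hφ
  refine sum_eq_zero fun K _ => ?_
  rw [det_zero_of_row_eq hne (funext fun q => by rw [submatrix_apply, submatrix_apply, hab]),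
    zero_mul]

lemma abs_wedgePairing {m : ℕ} {φ : Fin k → Fin m} (hφ : Injective φ) {J : Idx m k}
    (hJ : ∀ a, φ a ∈ J.1) (v : Lam m k) : |wedgePairing φ v| = |v J| := by
  have hvanish : ∀ K ≠ J,
      ((1 : Matrix (Fin m) (Fin m) ℝ).submatrix φ (finsetEmb K)).det = 0 := by
    intro K hK
    obtain ⟨y, hyK, hyJ⟩ := Idx.exists_mem_notMem_of_ne hK
    obtain ⟨q, rfl⟩ := exists_finsetEmb_eq K hyK
    exact det_eq_zero_of_column_eq_zero q fun p => by
      simp [one_apply, ne_of_mem_of_not_mem (hJ p) hyJ]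
  choose ψ hψ using fun a => exists_finsetEmb_eq J (hJ a)
  have hψinj : Injective ψ := fun a b h => hφ (by rw [← hψ a, ← hψ b, h])
  set σ := Equiv.ofBijective ψ (Finite.injective_iff_bijective.1 hψinj)
  have hperm : (1 : Matrix (Fin m) (Fin m) ℝ).submatrix φ (finsetEmb J)
      = (1 : Matrix (Fin k) (Fin k) ℝ).submatrix σ id := by
    ext p q
    simp [σ, one_apply, ← hψ p, (finsetEmb_injective J).eq_iff]
  rw [wedgePairing, sum_eq_single J (fun K _ hK => by rw [hvanish K hK, zero_mul]) (by simp),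
    hperm, det_permute, det_one, mul_one, abs_mul]
  rcases Int.units_eq_one_or (Equiv.Perm.sign σ) with h | h <;> simp [h]

lemma det_submatrix_uxMat_eq_zero (x : Fin n → ℝ) {K K' : Idx (n+1) k} {y : Fin (n+1)}
    (hyK : y ∈ K.1) (hy0 : y ≠ 0) (hyK' : y ∉ K'.1) :
    ((uxMat n x).submatrix (finsetEmb K) (finsetEmb K')).det = 0 := by
  obtain ⟨p, rfl⟩ := exists_finsetEmb_eq K hyK
  exact det_eq_zero_of_row_eq_zero p fun q => by
    rw [submatrix_apply, uxMat_of_ne_zero x hy0,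
      one_apply_ne fun h => hyK' (by rw [h]; exact finsetEmb_mem K' q)]

variable [NeZero k]

lemma det_submatrix_uxMat_self (x : Fin n → ℝ) {K : Idx (n+1) k}
    (h0 : (0 : Fin (n+1)) ∈ K.1) : ((uxMat n x).submatrix (finsetEmb K) (finsetEmb K)).det = 1 :=
  det_upperTri _
    (fun p q hqp => by
      have hp : p ≠ 0 := by rintro rfl; simp at hqp
      rw [submatrix_apply, uxMat_of_ne_zero x (finsetEmb_ne_zero K h0 hp),
        one_apply_ne ((finsetEmb_injective K).ne (by rintro rfl; exact lt_irrefl _ hqp))])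
    (fun p => by
      by_cases hp : p = 0
      · rw [hp, submatrix_apply, finsetEmb_zero K h0, uxMat_zero_zero]
      · rw [submatrix_apply, uxMat_of_ne_zero x (finsetEmb_ne_zero K h0 hp), one_apply_eq])

lemma extPow_uxMat_apply_of_zero_mem (x : Fin n → ℝ) (v : Lam (n+1) k) {K : Idx (n+1) k}
    (h0 : (0 : Fin (n+1)) ∈ K.1) :
    extPow (uxMat n x) v K = v K + extPow (uxMat n x) (projMinus v) K := by
  have hterm : ∀ K' ∈ univ.erase K,
      ((uxMat n x).submatrix (finsetEmb K) (finsetEmb K')).det * v K'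
        = ((uxMat n x).submatrix (finsetEmb K) (finsetEmb K')).det * projMinus v K' := by
    intro K' hK'
    by_cases h0' : (0 : Fin (n+1)) ∈ K'.1
    · obtain ⟨y, hyK, hyK'⟩ := Idx.exists_mem_notMem_of_ne (ne_of_mem_erase hK').symm
      rw [det_submatrix_uxMat_eq_zero x hyK (by rintro rfl; exact hyK' h0') hyK', zero_mul,
        zero_mul]
    · simp [projMinus, h0']
  rw [extPow, extPow, ← add_sum_erase _ _ (mem_univ K), ← add_sum_erase _ _ (mem_univ K),
    sum_congr rfl hterm, det_submatrix_uxMat_self x h0]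
  simp [projMinus, h0]

lemma extPow_uxMat_update (x : Fin n → ℝ) (j : Fin n) (y : ℝ) (v : Lam (n+1) k)
    {K : Idx (n+1) k} (h0 : (0 : Fin (n+1)) ∈ K.1) :
    extPow (uxMat n (update x j y)) v K
      = extPow (uxMat n (update x j 0)) v K
        + y * wedgePairing (update (finsetEmb K) 0 j.succ) v := by
  rw [extPow, extPow, wedgePairing, mul_sum, ← sum_add_distrib]
  refine sum_congr rfl fun K' _ => ?_
  set x' := update x j 0
  set M := (uxMat n x').submatrix (finsetEmb K) (finsetEmb K')
  have hrow : (uxMat n (update x j y)).submatrix (finsetEmb K) (finsetEmb K')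
      = M.updateRow 0 (M 0 + y • fun q => uxMat n x' j.succ (finsetEmb K' q)) := by
    rw [← update_idem (0 : ℝ) y x, uxMat_update]
    ext p q
    by_cases hp : p = 0
    · subst hp; simp [M, x', finsetEmb_zero K h0]
    · simp [M, x', updateRow_ne hp, finsetEmb_ne_zero K h0 hp]
  have hbasis : M.updateRow 0 (fun q => uxMat n x' j.succ (finsetEmb K' q))
      = (1 : Matrix (Fin (n+1)) (Fin (n+1)) ℝ).submatrix (update (finsetEmb K) 0 j.succ)
          (finsetEmb K') := by
    ext p q
    by_cases hp : p = 0
    · subst hp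
      rw [updateRow_self, submatrix_apply, update_self, uxMat_of_ne_zero _ (Fin.succ_ne_zero j)]
    · rw [updateRow_ne hp, submatrix_apply, update_of_ne hp]
      simp only [M, submatrix_apply]
      rw [uxMat_of_ne_zero _ (finsetEmb_ne_zero K h0 hp)]
  rw [hrow, det_updateRow_add, updateRow_eq_self, det_updateRow_smul, hbasis, add_mul, mul_assoc]

lemma extPow_uxMat_update_of_succ_mem (x : Fin n → ℝ) (j : Fin n) (y : ℝ) (v : Lam (n+1) k)
    {K : Idx (n+1) k} (h0 : (0 : Fin (n+1)) ∈ K.1) (hj : j.succ ∈ K.1) :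
    extPow (uxMat n (update x j y)) v K = extPow (uxMat n x) v K := by
  have hφ : ¬ Injective (update (finsetEmb K) 0 j.succ) := by
    obtain ⟨a, ha⟩ := exists_finsetEmb_eq K hj
    have ha0 : a ≠ 0 := by
      rintro rfl; exact Fin.succ_ne_zero j (ha.symm.trans (finsetEmb_zero K h0))
    exact fun hinj => ha0 (hinj (by simp [ha0, ha]))
  conv_rhs => rw [← update_eq_self j x]
  rw [extPow_uxMat_update x j y v h0, extPow_uxMat_update x j (x j) v h0,
    wedgePairing_of_not_injective hφ]
  simp

end Minors

section OneDimensional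

open MeasureTheory Set

lemma rpow_neg_le_rpow_neg {a b : ℝ≥0∞} (h : a ≤ b) {γ : ℝ} (hγ : 0 ≤ γ) :
    b ^ (-γ) ≤ a ^ (-γ) := by
  rw [ENNReal.rpow_neg, ENNReal.rpow_neg]
  exact ENNReal.inv_le_inv.2 (ENNReal.rpow_le_rpow h hγ)

lemma rpow_neg_le_prod_rpow_neg {ι : Type*} {a : ℝ≥0∞} {b : ι → ℝ≥0∞} {T : Finset ι}
    (hT : T.Nonempty) (hb : ∀ j ∈ T, b j ≤ a) {θ : ℝ} (hθ : 0 ≤ θ) :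
    a ^ (-θ) ≤ ∏ j ∈ T, b j ^ (-(θ / T.card)) := by
  have hcard : (T.card : ℝ) ≠ 0 := Nat.cast_ne_zero.2 hT.card_pos.ne'
  calc a ^ (-θ) = ∏ _j ∈ T, a ^ (-(θ / T.card)) := by
        rw [prod_const, ← ENNReal.rpow_natCast, ← ENNReal.rpow_mul]
        congr 1
        field_simp
    _ ≤ ∏ j ∈ T, b j ^ (-(θ / T.card)) :=
        prod_le_prod' fun j hj => rpow_neg_le_rpow_neg (hb j hj) (by positivity)

lemma ofReal_div_rpow_neg {x y : ℝ} (hx : 0 ≤ x) (hy : 0 < y) (θ : ℝ) :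
    ENNReal.ofReal (x / y) ^ (-θ) = ENNReal.ofReal (y ^ θ) * ENNReal.ofReal x ^ (-θ) := by
  rw [div_eq_mul_inv, ENNReal.ofReal_mul hx,
    ENNReal.mul_rpow_of_ne_top ENNReal.ofReal_ne_top ENNReal.ofReal_ne_top,
    ENNReal.ofReal_rpow_of_pos (inv_pos.2 hy), Real.inv_rpow hy.le, Real.rpow_neg hy.le, inv_inv,
    mul_comm]

lemma setLIntegral_Icc_abs_rpow_neg_lt_top {β : ℝ} (hβ : β < 1) :
    ∫⁻ y in Icc (-1 : ℝ) 1, ENNReal.ofReal |y| ^ (-β) < ⊤ := by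
  have hloc : LocallyIntegrable (fun y : ℝ => |y| ^ (-β)) :=
    locallyIntegrable_of_norm_le_rpow (by simp) (by simpa using hβ) (C := 1)
      (ae_of_all _ fun y => by
        rw [Real.norm_eq_abs, abs_of_nonneg (Real.rpow_nonneg (abs_nonneg y) _), one_mul,
          Real.norm_eq_abs])
      (continuous_abs.measurable.pow_const _).aestronglyMeasurable
  refine lt_of_eq_of_lt (lintegral_congr_ae ?_)
    (hloc.integrableOn_isCompact isCompact_Icc).lintegral_lt_top
  filter_upwards [ae_restrict_of_ae ((countable_singleton (0 : ℝ)).ae_notMem volume)] with y hy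
  exact ENNReal.ofReal_rpow_of_pos (abs_pos.2 hy)

/-- Away from `[-1, 1]` the integrand is at most `1`, and translation does not change the
integral over `ℝ`; this gives a bound uniform in the affine function. -/
lemma exists_setLIntegral_abs_affine_rpow_neg_le {β : ℝ} (hβ0 : 0 ≤ β) (hβ1 : β < 1) :
    ∃ A : ℝ≥0∞, A ≠ ⊤ ∧ ∀ c r : ℝ, c ≠ 0 →
      ∫⁻ y in Icc (-(1/2) : ℝ) (1/2), ENNReal.ofReal |c * y + r| ^ (-β)
        ≤ A * ENNReal.ofReal |c| ^ (-β) := by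
  set F : ℝ → ℝ≥0∞ := (Icc (-1 : ℝ) 1).indicator fun y => ENNReal.ofReal |y| ^ (-β)
  have hF : ∀ z, ENNReal.ofReal |z| ^ (-β) ≤ F z + 1 := by
    intro z
    by_cases hz : z ∈ Icc (-1 : ℝ) 1
    · simp [F, hz]
    · have h1 : 1 ≤ ENNReal.ofReal |z| :=
        ENNReal.one_le_ofReal.2 (not_lt.1 fun h => hz (abs_le.1 h.le))
      calc ENNReal.ofReal |z| ^ (-β) ≤ 1 ^ (-β) := rpow_neg_le_rpow_neg h1 hβ0
        _ ≤ F z + 1 := by rw [ENNReal.one_rpow]; exact le_add_self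
  refine ⟨(∫⁻ y, F y) + 1, ?_, fun c r hc => ?_⟩
  · rw [lintegral_indicator measurableSet_Icc]
    exact ENNReal.add_ne_top.2 ⟨(setLIntegral_Icc_abs_rpow_neg_lt_top hβ1).ne, ENNReal.one_ne_top⟩
  have hscale : ∀ y, ENNReal.ofReal |c * y + r| ^ (-β)
      = ENNReal.ofReal |c| ^ (-β) * ENNReal.ofReal |y + r / c| ^ (-β) := by
    intro y
    rw [show c * y + r = c * (y + r / c) by field_simp, abs_mul, ENNReal.ofReal_mul (abs_nonneg c),
      ENNReal.mul_rpow_of_ne_top ENNReal.ofReal_ne_top ENNReal.ofReal_ne_top]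
  simp_rw [hscale]
  rw [lintegral_const_mul' _ _ (ENNReal.rpow_ne_top_of_ne_zero (by simpa using hc)
    ENNReal.ofReal_ne_top), mul_comm]
  refine mul_le_mul_left ?_ _
  calc ∫⁻ y in Icc (-(1/2) : ℝ) (1/2), ENNReal.ofReal |y + r / c| ^ (-β)
      ≤ ∫⁻ y in Icc (-(1/2) : ℝ) (1/2), (F (y + r / c) + 1) := lintegral_mono fun y => hF _
    _ = (∫⁻ y in Icc (-(1/2) : ℝ) (1/2), F (y + r / c)) + 1 := by
        rw [lintegral_add_right _ measurable_const, setLIntegral_const, Real.volume_Icc]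
        norm_num
    _ ≤ (∫⁻ y, F y) + 1 := add_le_add ((setLIntegral_le_lintegral _ _).trans
          (lintegral_add_right_eq_self (μ := volume) F (r / c)).le) le_rfl

end OneDimensional

section Marginal

open MeasureTheory Function

variable {δ : Type*} [DecidableEq δ] {X : δ → Type*}

lemma dependsOn_compl_of_update_eq {β : Type*} {f : (∀ j, X j) → β} (S : Finset δ)
    (h : ∀ j ∈ S, ∀ x y, f (update x j y) = f x) : DependsOn f (↑S)ᶜ := by
  induction S using Finset.induction_on with
  | empty => exact fun x y hxy => congrArg f (funext fun j => hxy j (by simp))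
  | insert a S ha ih =>
    intro x y hxy
    rw [← h a (mem_insert_self a S) x (y a)]
    refine ih (fun j hj => h j (mem_insert_of_mem hj)) fun j hj => ?_
    by_cases hja : j = a
    · subst hja; simp
    · rw [update_of_ne hja]
      exact hxy j (by simpa [hja] using hj)

variable [∀ j, MeasurableSpace (X j)] {μ : ∀ j, Measure (X j)}

lemma lmarginal_mul_of_dependsOn [∀ j, SigmaFinite (μ j)] {s : Finset δ}
    {c f : (∀ j, X j) → ℝ≥0∞} (hc : DependsOn c (↑s)ᶜ) (hf : Measurable f) :
    (∫⋯∫⁻_s, (fun x => c x * f x) ∂μ) = fun x => c x * (∫⋯∫⁻_s, f ∂μ) x := by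
  ext x
  refine (lintegral_congr fun y => ?_).trans
    (lintegral_const_mul _ (hf.comp measurable_updateFinset))
  have hcx : c (updateFinset x s y) = c x :=
    hc fun j hj => by simp [updateFinset_def, show j ∉ s from hj]
  exact congrArg (· * f (updateFinset x s y)) hcx

lemma lmarginal_prod_le_prod [∀ j, SigmaFinite (μ j)] (T : Finset δ)
    {g : δ → (∀ j, X j) → ℝ≥0∞} {B : δ → ℝ≥0∞} (hg : ∀ j, Measurable (g j))
    (hdep : ∀ j ∈ T, DependsOn (g j) (↑(T.erase j))ᶜ)
    (hB : ∀ j ∈ T, ∀ x, ∫⁻ y, g j (update x j y) ∂μ j ≤ B j) (x : ∀ j, X j) :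
    (∫⋯∫⁻_T, (fun x => ∏ j ∈ T, g j x) ∂μ) x ≤ ∏ j ∈ T, B j := by
  induction T using Finset.induction_on generalizing x with
  | empty => simp
  | insert a S ha ih =>
    have hdepS : ∀ j ∈ S, DependsOn (g j) (↑(S.erase j))ᶜ := fun j hj =>
      (hdep j (mem_insert_of_mem hj)).mono
        (Set.compl_subset_compl.2 (coe_subset.2 (erase_subset_erase j (subset_insert a S))))
    have hga : DependsOn (g a) (↑S)ᶜ := by
      simpa [erase_insert ha] using hdep a (mem_insert_self a S)
    have hprod : ∀ T' : Finset δ, Measurable fun x => ∏ j ∈ T', g j x :=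
      fun T' => Finset.measurable_prod _ fun j _ => hg j
    simp_rw [prod_insert ha]
    have hmeas : Measurable fun x => g a x * ∏ j ∈ S, g j x := (hg a).mul (hprod S)
    rw [lmarginal_insert _ hmeas ha, lmarginal_mul_of_dependsOn hga (hprod S)]
    calc ∫⁻ y, g a (update x a y) * (∫⋯∫⁻_S, (fun x => ∏ j ∈ S, g j x) ∂μ) (update x a y) ∂μ a
        ≤ ∫⁻ y, g a (update x a y) * ∏ j ∈ S, B j ∂μ a :=
          lintegral_mono fun y => mul_le_mul_right
            (ih hdepS (fun j hj => hB j (mem_insert_of_mem hj)) _) _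
      _ = (∫⁻ y, g a (update x a y) ∂μ a) * ∏ j ∈ S, B j :=
          lintegral_mul_const _ ((hg a).comp (measurable_update x))
      _ ≤ B a * ∏ j ∈ S, B j := mul_le_mul_left (hB a (mem_insert_self a S) x) _

lemma lintegral_prod_le_prod [Fintype δ] [∀ j, IsProbabilityMeasure (μ j)] (T : Finset δ)
    {g : δ → (∀ j, X j) → ℝ≥0∞} {B : δ → ℝ≥0∞} (hg : ∀ j, Measurable (g j))
    (hdep : ∀ j ∈ T, DependsOn (g j) (↑(T.erase j))ᶜ)
    (hB : ∀ j ∈ T, ∀ x, ∫⁻ y, g j (update x j y) ∂μ j ≤ B j) :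
    ∫⁻ x, ∏ j ∈ T, g j x ∂Measure.pi μ ≤ ∏ j ∈ T, B j := by
  have hconst : (∫⋯∫⁻_T, (fun _ => ∏ j ∈ T, B j) ∂μ) = fun _ => ∏ j ∈ T, B j := by
    ext x; simp [lmarginal]
  calc ∫⁻ x, ∏ j ∈ T, g j x ∂Measure.pi μ ≤ ∫⁻ _, ∏ j ∈ T, B j ∂Measure.pi μ :=
        lintegral_le_of_lmarginal_le T (Finset.measurable_prod _ fun j _ => hg j)
          measurable_const (by rw [hconst]; exact lmarginal_prod_le_prod T hg hdep hB)
    _ = ∏ j ∈ T, B j := by simp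

end Marginal

section Expansion

open MeasureTheory Set Function

variable {d k : ℕ}

lemma card_filter_succ_mem {J : Idx (d+1) k} (h0 : (0 : Fin (d+1)) ∉ J.1) :
    (univ.filter fun j : Fin d => j.succ ∈ J.1).card = k := by
  rw [← card_map (Fin.succEmb d)]
  refine (congrArg card ?_).trans J.2
  ext x
  cases x using Fin.cases <;> simp [h0]

/-- Replacing `a ∈ J` by `0 ∉ J` and then `e_0` by `e_a` in the wedge gives back `J`. -/
lemma abs_wedgePairing_update_zero [NeZero k] {J K : Idx (d+1) k} {a : Fin (d+1)}
    (h0 : (0 : Fin (d+1)) ∉ J.1) (ha : a ∈ J.1) (hK : K.1 = insert 0 (J.1.erase a))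
    (v : Lam (d+1) k) : |wedgePairing (update (finsetEmb K) 0 a) v| = |v J| := by
  have h0K : (0 : Fin (d+1)) ∈ K.1 := by simp [hK]
  have haK : a ∉ K.1 := by
    rw [hK, Finset.mem_insert, Finset.mem_erase, not_or]
    exact ⟨by rintro rfl; exact h0 ha, by simp⟩
  have hmem : ∀ p ≠ 0, finsetEmb K p ∈ J.1.erase a := fun p hp => by
    have := finsetEmb_mem K p
    rw [hK, Finset.mem_insert] at this
    exact this.resolve_left (finsetEmb_ne_zero K h0K hp)
  refine abs_wedgePairing (fun p q hpq => ?_) (fun p => ?_) v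
  · by_cases hp : p = 0 <;> by_cases hq : q = 0
    · rw [hp, hq]
    · subst hp; rw [update_self, update_of_ne hq] at hpq
      exact absurd (hpq ▸ finsetEmb_mem K q) haK
    · subst hq; rw [update_self, update_of_ne hp] at hpq
      exact absurd (hpq ▸ finsetEmb_mem K p) haK
    · rw [update_of_ne hp, update_of_ne hq] at hpq
      exact finsetEmb_injective K hpq
  · by_cases hp : p = 0
    · subst hp; rwa [update_self]
    · rw [update_of_ne hp]; exact mem_of_mem_erase (hmem p hp)

instance : IsProbabilityMeasure (volume.restrict (Icc (-(1/2) : ℝ) (1/2))) :=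
  ⟨by rw [Measure.restrict_apply_univ, Real.volume_Icc]; norm_num⟩

lemma volume_restrict_Icube (d : ℕ) :
    volume.restrict (Icube d)
      = Measure.pi fun _ : Fin d => volume.restrict (Icc (-(1/2) : ℝ) (1/2)) := by
  rw [Icube, volume_pi, Measure.restrict_pi_pi]

lemma norm_projPlus_extPow_uxMat_ge [NeZero k] (v : Lam (d+1) k) {K : Idx (d+1) k}
    (h0 : (0 : Fin (d+1)) ∈ K.1) {s : Fin d → ℝ} (hs : s ∈ Icube d) :
    |v K| - Fintype.card (Idx (d+1) k) * k.factorial * ‖projMinus v‖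
      ≤ ‖projPlus (extPow (uxMat d s) v)‖ := by
  have hs1 : ∀ j, |s j| ≤ 1 := fun j =>
    abs_le.2 ⟨by linarith [(hs j (mem_univ j)).1], by linarith [(hs j (mem_univ j)).2]⟩
  calc _ ≤ |v K| - |extPow (uxMat d s) (projMinus v) K| := by
        linarith [abs_extPow_apply_le (abs_uxMat_le_one hs1) (projMinus v) K]
    _ ≤ |extPow (uxMat d s) v K| := by
        rw [extPow_uxMat_apply_of_zero_mem s v h0]; exact abs_sub_abs_le_abs_add _ _
    _ ≤ _ := abs_apply_le_norm_projPlus _ h0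

lemma setLIntegral_Icube_rpow_neg_le_of_projMinus_small [NeZero k] {θ : ℝ} (hθ : 0 ≤ θ)
    {v : Lam (d+1) k} (hv : v ≠ 0)
    (hsmall : 2 * (Fintype.card (Idx (d+1) k) * k.factorial) * ‖projMinus v‖ ≤ ‖v‖) :
    ∫⁻ s in Icube d, ENNReal.ofReal ‖projPlus (extPow (uxMat d s) v)‖ ^ (-θ)
      ≤ ENNReal.ofReal (2 ^ θ) * ENNReal.ofReal ‖v‖ ^ (-θ) := by
  have hv0 : 0 < ‖v‖ := norm_pos_iff.2 hv
  have : Nonempty (Idx (d+1) k) := not_isEmpty_iff.1 fun h => hv (Subsingleton.elim _ _)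
  obtain ⟨K, hK⟩ := exists_abs_apply_eq_norm v
  have h0K : (0 : Fin (d+1)) ∈ K.1 := by
    by_contra h0
    have hle : |v K| ≤ ‖projMinus v‖ := by
      simpa [projMinus, h0] using norm_le_pi_norm (projMinus v) K
    have hN : (1 : ℝ) ≤ Fintype.card (Idx (d+1) k) * k.factorial :=
      one_le_mul_of_one_le_of_one_le (by exact_mod_cast Fintype.card_pos)
        (by exact_mod_cast k.factorial_pos)
    nlinarith [norm_nonneg (projMinus v)]
  have hpt : ∀ s ∈ Icube d, ‖v‖ / 2 ≤ ‖projPlus (extPow (uxMat d s) v)‖ := fun s hs => by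
    linarith [hK ▸ norm_projPlus_extPow_uxMat_ge v h0K hs]
  calc ∫⁻ s in Icube d, ENNReal.ofReal ‖projPlus (extPow (uxMat d s) v)‖ ^ (-θ)
      ≤ ∫⁻ _ in Icube d, ENNReal.ofReal (‖v‖ / 2) ^ (-θ) :=
        setLIntegral_mono measurable_const fun s hs =>
          rpow_neg_le_rpow_neg (ENNReal.ofReal_le_ofReal (hpt s hs)) hθ
    _ = ENNReal.ofReal (2 ^ θ) * ENNReal.ofReal ‖v‖ ^ (-θ) := by
        rw [volume_restrict_Icube, lintegral_const, measure_univ, mul_one,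
          ofReal_div_rpow_neg hv0.le two_pos]

lemma exists_idx_insert_zero_erase {J : Idx (d+1) k} {a : Fin (d+1)}
    (h0 : (0 : Fin (d+1)) ∉ J.1) (ha : a ∈ J.1) :
    ∃ K : Idx (d+1) k, K.1 = insert 0 (J.1.erase a) :=
  ⟨⟨_, by rw [card_insert_of_notMem fun h => h0 (mem_of_mem_erase h), card_erase_of_mem ha, J.2,
    Nat.sub_add_cancel (J.2 ▸ card_pos.2 ⟨a, ha⟩)]⟩, rfl⟩

lemma dependsOn_extPow_uxMat_apply [NeZero k] (v : Lam (d+1) k) {K : Idx (d+1) k}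
    (h0 : (0 : Fin (d+1)) ∈ K.1) {S : Finset (Fin d)} (hS : ∀ m ∈ S, m.succ ∈ K.1) :
    DependsOn (fun s => extPow (uxMat d s) v K) (↑S)ᶜ :=
  dependsOn_compl_of_update_eq S fun m hm s y =>
    extPow_uxMat_update_of_succ_mem s m y v h0 (hS m hm)

lemma exists_setLIntegral_update_rpow_neg_le [NeZero k] {β : ℝ} (hβ0 : 0 ≤ β) (hβ1 : β < 1) :
    ∃ A : ℝ≥0∞, A ≠ ⊤ ∧ ∀ (v : Lam (d+1) k) {J K : Idx (d+1) k} {j : Fin d},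
      (0 : Fin (d+1)) ∉ J.1 → j.succ ∈ J.1 → K.1 = insert 0 (J.1.erase j.succ) → v J ≠ 0 →
      ∀ s, ∫⁻ y in Icc (-(1/2) : ℝ) (1/2),
          ENNReal.ofReal |extPow (uxMat d (update s j y)) v K| ^ (-β)
        ≤ A * ENNReal.ofReal |v J| ^ (-β) := by
  obtain ⟨A, hA, hA1⟩ := exists_setLIntegral_abs_affine_rpow_neg_le hβ0 hβ1
  refine ⟨A, hA, fun v J K j h0 hj hK hvJ s => ?_⟩
  have hc := abs_wedgePairing_update_zero h0 hj hK v
  rw [← hc]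
  refine le_of_eq_of_le (lintegral_congr fun y => ?_)
    (hA1 _ (extPow (uxMat d (update s j 0)) v K) fun h => hvJ (by simpa [h] using hc.symm))
  rw [extPow_uxMat_update s j y v (by simp [hK]), add_comm, mul_comm]

lemma exists_setLIntegral_Icube_rpow_neg_le_of_zero_notMem {θ : ℝ} (hθ0 : 0 < θ)
    (hθk : θ < k) :
    ∃ B : ℝ≥0∞, B ≠ ⊤ ∧ ∀ (v : Lam (d+1) k) (J : Idx (d+1) k), (0 : Fin (d+1)) ∉ J.1 →
      v J ≠ 0 → ∫⁻ s in Icube d, ENNReal.ofReal ‖projPlus (extPow (uxMat d s) v)‖ ^ (-θ)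
        ≤ B * ENNReal.ofReal |v J| ^ (-θ) := by
  have hk : (0 : ℝ) < k := hθ0.trans hθk
  have : NeZero k := ⟨by rintro rfl; simp at hk⟩
  obtain ⟨A, hA, hslice⟩ := exists_setLIntegral_update_rpow_neg_le (d := d) (k := k)
    (β := θ / k) (by positivity) ((div_lt_one hk).2 hθk)
  refine ⟨A ^ k, ENNReal.pow_ne_top hA, fun v J h0 hvJ => ?_⟩
  set T := univ.filter fun j : Fin d => j.succ ∈ J.1
  have hT : T.card = k := card_filter_succ_mem h0
  have hTmem : ∀ j, j ∈ T ↔ j.succ ∈ J.1 := fun j => by simp [T]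
  have : Nonempty (Idx (d+1) k) := ⟨J⟩
  choose! K hK using fun j (hj : j ∈ T) => exists_idx_insert_zero_erase h0 ((hTmem j).1 hj)
  have h0K : ∀ j ∈ T, (0 : Fin (d+1)) ∈ (K j).1 := fun j hj => by simp [hK j hj]
  set g : Fin d → (Fin d → ℝ) → ℝ≥0∞ :=
    fun j s => ENNReal.ofReal |extPow (uxMat d s) v (K j)| ^ (-(θ / k))
  have hprod : ∀ s, ENNReal.ofReal ‖projPlus (extPow (uxMat d s) v)‖ ^ (-θ) ≤ ∏ j ∈ T, g j s :=
    fun s => by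
      simpa only [hT] using rpow_neg_le_prod_rpow_neg (card_pos.1 (hT ▸ NeZero.pos k))
        (fun j hj => ENNReal.ofReal_le_ofReal (abs_apply_le_norm_projPlus _ (h0K j hj))) hθ0.le
  have hdep : ∀ j ∈ T, DependsOn (g j) (↑(T.erase j))ᶜ := fun j hj _ _ hxy =>
    congrArg (fun w => ENNReal.ofReal |w| ^ (-(θ / k)))
      (dependsOn_extPow_uxMat_apply v (h0K j hj) (fun m hm => by
        rw [hK j hj]
        exact mem_insert_of_mem (mem_erase.2 ⟨(Fin.succ_injective _).ne (ne_of_mem_erase hm),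
          (hTmem m).1 (mem_of_mem_erase hm)⟩)) hxy)
  calc ∫⁻ s in Icube d, ENNReal.ofReal ‖projPlus (extPow (uxMat d s) v)‖ ^ (-θ)
      ≤ ∫⁻ s in Icube d, ∏ j ∈ T, g j s := lintegral_mono hprod
    _ ≤ ∏ _j ∈ T, A * ENNReal.ofReal |v J| ^ (-(θ / k)) := by
        rw [volume_restrict_Icube]
        exact lintegral_prod_le_prod T
          (fun j => (continuous_extPow_uxMat_apply v (K j)).abs.measurable.ennreal_ofReal
            |>.pow_const _)
          hdep fun j hj => hslice v h0 ((hTmem j).1 hj) (hK j hj) hvJ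
    _ = A ^ k * ENNReal.ofReal |v J| ^ (-θ) := by
        rw [prod_const, hT, mul_pow, ← ENNReal.rpow_natCast (ENNReal.ofReal |v J| ^ _) k,
          ← ENNReal.rpow_mul]
        congr 2
        field_simp

theorem exists_setLIntegral_Icube_norm_projPlus_rpow_neg_le {θ : ℝ} (hθ0 : 0 < θ)
    (hθk : θ < k) :
    ∃ C : ℝ, 0 < C ∧ ∀ v : Lam (d+1) k, v ≠ 0 →
      ∫⁻ s in Icube d, ENNReal.ofReal ‖projPlus (extPow (uxMat d s) v)‖ ^ (-θ)
        ≤ ENNReal.ofReal C * ENNReal.ofReal ‖v‖ ^ (-θ) := by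
  have : NeZero k := ⟨by rintro rfl; simp at hθk; linarith⟩
  obtain ⟨B, hB, hconc⟩ := exists_setLIntegral_Icube_rpow_neg_le_of_zero_notMem (d := d) hθ0 hθk
  set N : ℝ := Fintype.card (Idx (d+1) k) * k.factorial
  refine ⟨2 ^ θ + B.toReal * (2 * N) ^ θ, by positivity, fun v hv => ?_⟩
  rw [ENNReal.ofReal_add (by positivity) (by positivity), add_mul]
  by_cases hsmall : 2 * N * ‖projMinus v‖ ≤ ‖v‖
  · exact le_add_right (setLIntegral_Icube_rpow_neg_le_of_projMinus_small hθ0.le hv hsmall)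
  refine le_add_left ?_
  have hv0 : 0 < ‖v‖ := norm_pos_iff.2 hv
  have : Nonempty (Idx (d+1) k) := not_isEmpty_iff.1 fun h => hv (Subsingleton.elim _ _)
  have hN : 0 < 2 * N := by positivity
  obtain ⟨J, hJ⟩ := exists_abs_apply_eq_norm (projMinus v)
  have hJbig : ‖v‖ / (2 * N) < |projMinus v J| := by rw [hJ, div_lt_iff₀ hN]; linarith
  have h0J : (0 : Fin (d+1)) ∉ J.1 := fun h0 => by
    simp [projMinus, h0] at hJbig; linarith [div_pos hv0 hN]
  have hvJ : projMinus v J = v J := if_pos h0J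
  rw [hvJ] at hJbig
  calc ∫⁻ s in Icube d, ENNReal.ofReal ‖projPlus (extPow (uxMat d s) v)‖ ^ (-θ)
      ≤ B * ENNReal.ofReal |v J| ^ (-θ) :=
        hconc v J h0J fun h => by simp [h] at hJbig; linarith [div_pos hv0 hN]
    _ ≤ B * ENNReal.ofReal (‖v‖ / (2 * N)) ^ (-θ) :=
        mul_le_mul_right (rpow_neg_le_rpow_neg (ENNReal.ofReal_le_ofReal hJbig.le) hθ0.le) _
    _ = ENNReal.ofReal (B.toReal * (2 * N) ^ θ) * ENNReal.ofReal ‖v‖ ^ (-θ) := by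
        rw [ofReal_div_rpow_neg hv0.le hN, ENNReal.ofReal_mul ENNReal.toReal_nonneg,
          ENNReal.ofReal_toReal hB, mul_assoc]

end Expansion

theorem expansion_of_vectors_general (d : ℕ) (i : ℕ) (θ : ℝ) (hθ0 : 0 < θ) (hθi : θ < (i : ℝ)) :
    ∃ C : ℝ, 0 < C ∧ ∀ t : ℝ, 0 < t → ∀ v : Lam (d+1) i, v ≠ 0 →
      (∫⁻ s in Icube d, ENNReal.ofReal ‖extPow (ctMat1 d t * uxMat d s) v‖ ^ (-θ)) ≤
        ENNReal.ofReal (C * Real.exp (-((((d : ℝ) + 1 - (i : ℝ)) / ((d : ℝ) + 1)) * θ * t)))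
          * ENNReal.ofReal ‖v‖ ^ (-θ) := by
  obtain ⟨C, hC, hbound⟩ := exists_setLIntegral_Icube_norm_projPlus_rpow_neg_le (d := d) hθ0 hθi
  refine ⟨C, hC, fun t _ v hv => ?_⟩
  set E := Real.exp (((d : ℝ) + 1 - i) / ((d : ℝ) + 1) * t)
  have hE : 0 < E := Real.exp_pos _
  have hlower : ∀ s, E * ‖projPlus (extPow (uxMat d s) v)‖
      ≤ ‖extPow (ctMat1 d t * uxMat d s) v‖ := fun s => by
    rw [← Real.norm_of_nonneg hE.le, ← norm_smul, ← projPlus_extPow_ctMat1_mul]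
    exact norm_projPlus_le _
  calc ∫⁻ s in Icube d, ENNReal.ofReal ‖extPow (ctMat1 d t * uxMat d s) v‖ ^ (-θ)
      ≤ ∫⁻ s in Icube d,
          ENNReal.ofReal E ^ (-θ) * ENNReal.ofReal ‖projPlus (extPow (uxMat d s) v)‖ ^ (-θ) :=
        lintegral_mono fun s => by
          rw [← ENNReal.mul_rpow_of_ne_top ENNReal.ofReal_ne_top ENNReal.ofReal_ne_top,
            ← ENNReal.ofReal_mul hE.le]
          exact rpow_neg_le_rpow_neg (ENNReal.ofReal_le_ofReal (hlower s)) hθ0.le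
    _ = ENNReal.ofReal E ^ (-θ)
          * ∫⁻ s in Icube d, ENNReal.ofReal ‖projPlus (extPow (uxMat d s) v)‖ ^ (-θ) :=
        lintegral_const_mul' _ _
          (ENNReal.rpow_ne_top_of_ne_zero (by simpa using hE) ENNReal.ofReal_ne_top)
    _ ≤ ENNReal.ofReal E ^ (-θ) * (ENNReal.ofReal C * ENNReal.ofReal ‖v‖ ^ (-θ)) :=
        mul_le_mul_right (hbound v hv) _
    _ = _ := by
        rw [ENNReal.ofReal_rpow_of_pos hE, ← Real.exp_mul, ENNReal.ofReal_mul hC.le, ← mul_assoc,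
          mul_comm (ENNReal.ofReal _) (ENNReal.ofReal C)]
        ring_nf

/-- Lemma 3.1: expansion of vectors in Λ^i ℝ^{d+1},
∫_{I^d} ‖c_t u(s) v‖^{−θ} ds ≤ C_θ e^{−((d+1−i)/(d+1))θt} ‖v‖^{−θ}. -/
theorem expansion_of_vectors
    (n d : ℕ) (hn : 2 ≤ n) (hd : 1 ≤ d) (hdn : d < n)
    (i : ℕ) (hi1 : 1 ≤ i) (hid : i ≤ d) (θ : ℝ) (hθ0 : 0 < θ) (hθi : θ < (i : ℝ)) :
    ∃ C : ℝ, 0 < C ∧ ∀ t : ℝ, 0 < t → ∀ v : Lam (d+1) i, v ≠ 0 →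
      (∫⁻ s in Icube d, ENNReal.ofReal ‖extPow (ctMat1 d t * uxMat d s) v‖ ^ (-θ)) ≤
        ENNReal.ofReal (C * Real.exp (-((((d : ℝ) + 1 - (i : ℝ)) / ((d : ℝ) + 1)) * θ * t)))
          * ENNReal.ofReal ‖v‖ ^ (-θ) :=
  expansion_of_vectors_general d i θ hθ0 hθi
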